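/- arXiv:2212.07587 — 5 statements merged into one kernel-verified Lean document; each statement's English description precedes it below -/
import Mathlib

section
/- Let A be a real m×n matrix, let φ : ℝ^m → ℝ and φ̃ : ℝ^n → ℝ be differentiable ϱ-strongly convex functions (ϱ > 0), and let α > 0. Then for all p, q ∈ ℝ^m and all w, u ∈ ℝ^n: ⟨p − q, Aw − Au⟩ ≥ −(1/(αϱ)) B_φ(q, p) − (α‖AᵀA‖/ϱ) B_φ̃(w, u), where ‖AᵀA‖ is the spectral norm (largest eigenvalue) of AᵀA. -/
/-! Strong convexity bounds each Bregman distance below by `ϱ / 2` times the squared distance of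
its arguments, and `‖A v‖ ^ 2 ≤ ‖A† A‖ ‖v‖ ^ 2` by the C*-identity. After these substitutions the
claim is Young's inequality `⟪a, b⟫ ≥ -‖a‖ ^ 2 / (2 α) - α ‖b‖ ^ 2 / 2` for `a = p - q` and
`b = A (w - u)`, which is `0 ≤ ‖a + α • b‖ ^ 2` divided by `2 α`. -/

noncomputable section
open scoped RealInnerProductSpace
open Filter

abbrev Euc (d : ℕ) : Type := EuclideanSpace ℝ (Fin d)

/-- Bregman distance associated with kernel `φ` whose gradient map is `φ'`. -/
def Breg {d : ℕ} (φ : Euc d → ℝ) (φ' : Euc d → Euc d) (x y : Euc d) : ℝ :=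
  φ x - φ y - ⟪φ' y, x - y⟫

open Set

theorem ConvexOn.add_fderiv_sub_le {E : Type*} [NormedAddCommGroup E] [NormedSpace ℝ E]
    {s : Set E} {f : E → ℝ} {f' : E →L[ℝ] ℝ} {x y : E} (hf : ConvexOn ℝ s f)
    (hx : x ∈ s) (hy : y ∈ s) (hf' : HasFDerivAt f f' y) :
    f y + f' (x - y) ≤ f x := by
  let L : ℝ →ᵃ[ℝ] E := AffineMap.lineMap y x
  have hline : ConvexOn ℝ (L ⁻¹' s) (f ∘ L) := hf.comp_affineMap L
  have hderiv : HasDerivAt (f ∘ L) (f' (x - y)) 0 :=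
    hf'.comp_hasDerivAt_of_eq 0 AffineMap.hasDerivAt_lineMap (by simp [L])
  have hL0 : L 0 = y := AffineMap.lineMap_apply_zero y x
  have hL1 : L 1 = x := AffineMap.lineMap_apply_one y x
  have hslope := hline.le_slope_of_hasDerivAt (x := 0) (y := 1)
    (by simpa [hL0] using hy) (by simpa [hL1] using hx) one_pos hderiv
  rw [slope_def_field, Function.comp_apply, Function.comp_apply, hL0, hL1] at hslope
  linarith

theorem StrongConvexOn.add_inner_sub_add_le {E : Type*} [NormedAddCommGroup E]
    [InnerProductSpace ℝ E] [CompleteSpace E] {s : Set E} {m : ℝ} {f : E → ℝ} {g x y : E}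
    (hf : StrongConvexOn s m f) (hx : x ∈ s) (hy : y ∈ s) (hg : HasGradientAt f g y) :
    f y + ⟪g, x - y⟫ + m / 2 * ‖x - y‖ ^ 2 ≤ f x := by
  have hderiv := hg.hasFDerivAt.sub (((hasFDerivAt_id y).norm_sq).const_mul (m / 2))
  have key := (strongConvexOn_iff_convex.mp hf).add_fderiv_sub_le hx hy hderiv
  simp only [sub_apply, smul_apply, nsmul_eq_mul,
    InnerProductSpace.toDual_apply_apply, ContinuousLinearMap.comp_apply, innerSL_apply_apply,
    id_eq, ContinuousLinearMap.id_apply, smul_eq_mul] at key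
  have hsq : ‖x - y‖ ^ 2 = ‖x‖ ^ 2 - 2 * ⟪y, x - y⟫ - ‖y‖ ^ 2 := by
    rw [norm_sub_sq_real, inner_sub_right, real_inner_comm x y, real_inner_self_eq_norm_sq]
    ring
  rw [hsq]
  linear_combination key

theorem half_mul_norm_sub_sq_le_breg {d : ℕ} {φ : Euc d → ℝ} {φ' : Euc d → Euc d} {ϱ : ℝ}
    (hφ : StrongConvexOn univ ϱ φ) {x y : Euc d} (hφ' : HasGradientAt φ (φ' y) y) :
    ϱ / 2 * ‖x - y‖ ^ 2 ≤ Breg φ φ' x y := by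
  have := hφ.add_inner_sub_add_le (mem_univ x) (mem_univ y) hφ'
  rw [Breg]
  linarith

theorem ContinuousLinearMap.norm_apply_sq_le_norm_adjoint_comp_self_mul {E F : Type*}
    [NormedAddCommGroup E] [InnerProductSpace ℝ E] [CompleteSpace E]
    [NormedAddCommGroup F] [InnerProductSpace ℝ F] [CompleteSpace F] (A : E →L[ℝ] F) (v : E) :
    ‖A v‖ ^ 2 ≤ ‖(adjoint A).comp A‖ * ‖v‖ ^ 2 := by
  rw [norm_adjoint_comp_self, ← sq, ← mul_pow]
  gcongr
  exact A.le_opNorm v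

theorem neg_div_sub_le_real_inner {E : Type*} [NormedAddCommGroup E] [InnerProductSpace ℝ E]
    {α : ℝ} (hα : 0 < α) (a b : E) :
    -(1 / (2 * α)) * ‖a‖ ^ 2 - α / 2 * ‖b‖ ^ 2 ≤ ⟪a, b⟫ := by
  have h := norm_add_sq_real a (α • b)
  rw [real_inner_smul_right, norm_smul, Real.norm_of_nonneg hα.le] at h
  have hnonneg : 0 ≤ ‖a‖ ^ 2 + 2 * (α * ⟪a, b⟫) + (α * ‖b‖) ^ 2 := h ▸ sq_nonneg _
  have hdiff : ⟪a, b⟫ - (-(1 / (2 * α)) * ‖a‖ ^ 2 - α / 2 * ‖b‖ ^ 2)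
      = (‖a‖ ^ 2 + 2 * (α * ⟪a, b⟫) + (α * ‖b‖) ^ 2) / (2 * α) := by
    field_simp
    ring
  rw [← sub_nonneg, hdiff]
  exact div_nonneg hnonneg (by positivity)

/-- Cauchy–Schwarz/Young-type lower bound on the cross term via
Bregman distances of `ϱ`-strongly convex kernels. -/
theorem cross_term_bregman_bound {n m : ℕ} (A : Euc n →L[ℝ] Euc m)
    (φ : Euc m → ℝ) (φ' : Euc m → Euc m)
    (φt : Euc n → ℝ) (φt' : Euc n → Euc n)
    (ϱ α : ℝ) (hϱ : 0 < ϱ) (hα : 0 < α)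
    (hφg : ∀ z, HasGradientAt φ (φ' z) z)
    (hφsc : ConvexOn ℝ Set.univ (fun z => φ z - ϱ / 2 * ‖z‖ ^ 2))
    (hφtg : ∀ z, HasGradientAt φt (φt' z) z)
    (hφtsc : ConvexOn ℝ Set.univ (fun z => φt z - ϱ / 2 * ‖z‖ ^ 2)) :
    ∀ (p q : Euc m) (w u : Euc n),
      -(1 / (α * ϱ)) * Breg φ φ' q p
          - α * ‖(ContinuousLinearMap.adjoint A).comp A‖ / ϱ * Breg φt φt' w u
        ≤ ⟪p - q, A w - A u⟫ := by
  intro p q w u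
  have hBq := half_mul_norm_sub_sq_le_breg (strongConvexOn_iff_convex.mpr hφsc) (x := q) (hφg p)
  have hBw := half_mul_norm_sub_sq_le_breg (strongConvexOn_iff_convex.mpr hφtsc) (x := w) (hφtg u)
  rw [norm_sub_rev] at hBq
  calc -(1 / (α * ϱ)) * Breg φ φ' q p
          - α * ‖(ContinuousLinearMap.adjoint A).comp A‖ / ϱ * Breg φt φt' w u
      ≤ -(1 / (α * ϱ)) * (ϱ / 2 * ‖p - q‖ ^ 2)
          - α * ‖(ContinuousLinearMap.adjoint A).comp A‖ / ϱ * (ϱ / 2 * ‖w - u‖ ^ 2) := by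
        rw [neg_mul, neg_mul]
        gcongr
    _ = -(1 / (2 * α)) * ‖p - q‖ ^ 2
          - α / 2 * (‖(ContinuousLinearMap.adjoint A).comp A‖ * ‖w - u‖ ^ 2) := by
        field_simp
    _ ≤ -(1 / (2 * α)) * ‖p - q‖ ^ 2 - α / 2 * ‖A (w - u)‖ ^ 2 := by
        gcongr
        exact A.norm_apply_sq_le_norm_adjoint_comp_self_mul (w - u)
    _ ≤ ⟪p - q, A w - A u⟫ := by
        rw [map_sub]
        exact neg_div_sub_le_real_inner hα _ _
end
end

section
/- (Key lemma for the dual updates.) Let Y ⊆ ℝ^m be nonempty closed convex, g : ℝ^m → (−∞,∞] proper closed convex, A a real m×n matrix, γ > 0, and y^k ∈ ℝ^m. Let φ : ℝ^m → ℝ be a differentiable ϱ-strongly convex kernel (ϱ > 0), and let a differentiable ϱ-strongly convex kernel on ℝ^n (also denoted φ) be given. For u, w ∈ ℝ^n, let ȳ_u be a minimizer over Y of y ↦ g(y) − ⟨Au, y⟩ + γφ(y) − γ⟨∇φ(y^k), y − y^k⟩ and ȳ_w a minimizer of the same function with u replaced by w. Then for every y ∈ Y and every α > 0: g(ȳ_u)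 − g(y) + ⟨ȳ_u − y, −Aw⟩ ≤ γ B_φ(y, y^k) − γ B_φ(y, ȳ_w) − γ B_φ(ȳ_u, y^k) + (α‖AᵀA‖/ϱ) B_φ(w, u) − (γ − 1/(αϱ)) B_φ(ȳ_w, ȳ_u), where ‖AᵀA‖ is the spectral norm of AᵀA. -/
/-!
The minimality of `ȳ_u` (resp. `ȳ_w`) gives a variational inequality which, through the
three-point identity for Bregman distances, reads
`f_u(ȳ_u) - f_u(z) ≤ γ (B(z, yᵏ) - B(z, ȳ_u) - B(ȳ_u, yᵏ))` with `f_u = g - ⟪A u, ·⟫`.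
Using it at `z = ȳ_w` for `u` and at `z = y` for `w` and adding, the left-hand side of the claim
is left with the coupling term `⟪A (u - w), ȳ_u - ȳ_w⟫`, which Young's inequality and the bounds
`B(a, b) ≥ ϱ/2 ‖a - b‖²` of the strongly convex kernels absorb into the two remaining terms.
-/

noncomputable section
open scoped RealInnerProductSpace
open Filter

open Set

section NormedSpace

variable {E : Type*} [NormedAddCommGroup E] [NormedSpace ℝ E]

theorem IsMinOn.sub_le_of_convexOn_add {s : Set E} {f h : E → ℝ} {h' : E →L[ℝ] ℝ} {x y : E}
    (hs : Convex ℝ s) (hf : ConvexOn ℝ s f) (hh : HasFDerivAt h h' x)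
    (hmin : IsMinOn (f + h) s x) (hx : x ∈ s) (hy : y ∈ s) :
    f x - f y ≤ h' (y - x) := by
  -- On the segment from `x` to `y`, replacing `f` by its chord keeps `x` a minimizer and makes
  -- the objective differentiable in the segment parameter.
  set ℓ : ℝ → ℝ := fun t => f x + t * (f y - f x) + h (x + t • (y - x))
  have hℓ : HasDerivAt ℓ (f y - f x + h' (y - x)) 0 := by
    have hline : HasDerivAt (fun t : ℝ => x + t • (y - x)) (y - x) 0 := by
      simpa using ((hasDerivAt_id (0 : ℝ)).smul_const (y - x)).const_add x
    have hh0 : HasFDerivAt h h' (x + (0 : ℝ) • (y - x)) := by simpa using hh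
    exact ((hasDerivAt_mul_const (f y - f x)).const_add (f x)).add
      (hh0.comp_hasDerivAt (0 : ℝ) hline)
  have hℓ_min : IsMinOn ℓ (Icc 0 1) 0 := by
    intro t ⟨ht0, ht1⟩
    have hseg : x + t • (y - x) = (1 - t) • x + t • y := by
      rw [smul_sub, sub_smul, one_smul]; abel
    have hchord := hf.2 hx hy (by linarith : (0 : ℝ) ≤ 1 - t) ht0 (by ring)
    have hmin_t := hmin (hseg ▸ hs hx hy (by linarith) ht0 (by ring))
    simp only [ℓ, hseg, zero_mul, zero_smul, add_zero, smul_eq_mul, Pi.add_apply,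
      mem_ofPred_eq] at hchord hmin_t ⊢
    linarith
  have hdir : (1 : ℝ) ∈ posTangentConeAt (Icc (0 : ℝ) 1) 0 :=
    mem_posTangentConeAt_of_segment_subset (by simp [segment_eq_Icc])
  have := hℓ_min.localize.hasFDerivWithinAt_nonneg hℓ.hasFDerivAt.hasFDerivWithinAt hdir
  simp only [ContinuousLinearMap.toSpanSingleton_apply, one_smul] at this
  linarith

theorem ConvexOn.le_sub_of_hasFDerivAt {s : Set E} {ψ : E → ℝ} {ψ' : E →L[ℝ] ℝ} {x y : E}
    (hs : Convex ℝ s) (hψ : ConvexOn ℝ s ψ) (hd : HasFDerivAt ψ ψ' y) (hx : x ∈ s)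
    (hy : y ∈ s) :
    ψ' (x - y) ≤ ψ x - ψ y := by
  -- `ψ + (-ψ)` is constant, so `y` minimizes it.
  have hmin : IsMinOn (ψ + -ψ) s y := fun z _ => by simp
  have := hmin.sub_le_of_convexOn_add hs hψ hd.neg hy hx
  simp only [neg_apply] at this
  linarith

end NormedSpace

section InnerProductSpace

variable {E F : Type*} [NormedAddCommGroup E] [InnerProductSpace ℝ E] [CompleteSpace E]
  [NormedAddCommGroup F] [InnerProductSpace ℝ F] [CompleteSpace F]

theorem sq_norm_sub_le_of_convexOn_sub_sq {s : Set E} {φ : E → ℝ} {φ' : E} {ϱ : ℝ} {x y : E}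
    (hs : Convex ℝ s) (hsc : ConvexOn ℝ s (fun z => φ z - ϱ / 2 * ‖z‖ ^ 2))
    (hd : HasGradientAt φ φ' y) (hx : x ∈ s) (hy : y ∈ s) :
    ϱ / 2 * ‖x - y‖ ^ 2 ≤ φ x - φ y - ⟪φ', x - y⟫ := by
  have hd' := hd.hasFDerivAt.sub ((hasFDerivAt_id y).norm_sq.const_mul (ϱ / 2))
  have := hsc.le_sub_of_hasFDerivAt hs hd' hx hy
  simp only [ContinuousLinearMap.comp_id, sub_apply, smul_apply, id_eq,
    InnerProductSpace.toDual_apply_apply, coe_innerSL_apply, nsmul_eq_mul, smul_eq_mul,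
    inner_sub_right, real_inner_self_eq_norm_sq, real_inner_comm x y] at this ⊢
  rw [norm_sub_sq_real]
  linarith

theorem IsMinOn.sub_le_of_prox {s : Set E} {f φ : E → ℝ} {φ' c z₀ x y : E} {γ : ℝ}
    (hmin : IsMinOn (fun z => f z + γ * φ z - γ * ⟪c, z - z₀⟫) s x)
    (hs : Convex ℝ s) (hf : ConvexOn ℝ s f) (hφ : HasGradientAt φ φ' x)
    (hx : x ∈ s) (hy : y ∈ s) :
    f x - f y ≤ γ * ⟪φ' - c, y - x⟫ := by
  have hlin : HasFDerivAt (fun z => ⟪c, z - z₀⟫) (innerSL ℝ c) x := by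
    simpa [inner_sub_right] using ((innerSL ℝ c).hasFDerivAt (x := x)).sub_const ⟪c, z₀⟫
  have hh := (hφ.hasFDerivAt.const_mul γ).sub (hlin.const_mul γ)
  have hmin' : IsMinOn (f + ((fun z => γ * φ z) - fun z => γ * ⟪c, z - z₀⟫)) s x := by
    refine isMinOn_iff.mpr fun z hz => ?_
    simp only [Pi.add_apply, Pi.sub_apply]
    linarith [isMinOn_iff.mp hmin z hz]
  have := hmin'.sub_le_of_convexOn_add hs hf hh hx hy
  simp only [sub_apply, smul_apply, InnerProductSpace.toDual_apply_apply, smul_eq_mul,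
    coe_innerSL_apply] at this
  rw [inner_sub_left]
  linarith

theorem ContinuousLinearMap.real_inner_apply_le (A : E →L[ℝ] F) {α : ℝ} (hα : 0 < α)
    (x : E) (p : F) :
    ⟪A x, p⟫ ≤ α / 2 * ‖(adjoint A).comp A‖ * ‖x‖ ^ 2 + 1 / (2 * α) * ‖p‖ ^ 2 := by
  have hyoung : ‖A‖ * ‖x‖ * ‖p‖ ≤ α / 2 * (‖A‖ * ‖x‖) ^ 2 + 1 / (2 * α) * ‖p‖ ^ 2 := by
    have : 0 ≤ (α * (‖A‖ * ‖x‖) - ‖p‖) ^ 2 / (2 * α) := by positivity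
    field_simp at this ⊢
    nlinarith [this]
  calc ⟪A x, p⟫ ≤ ‖A x‖ * ‖p‖ := real_inner_le_norm _ _
    _ ≤ ‖A‖ * ‖x‖ * ‖p‖ := by gcongr; exact A.le_opNorm x
    _ ≤ _ := by rw [norm_adjoint_comp_self]; linarith [hyoung]

end InnerProductSpace

theorem Breg_three_point {d : ℕ} (φ : Euc d → ℝ) (φ' : Euc d → Euc d) (a b c : Euc d) :
    ⟪φ' b - φ' c, a - b⟫ = Breg φ φ' a c - Breg φ φ' a b - Breg φ φ' b c := by
  simp only [Breg, inner_sub_left, inner_sub_right]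
  ring

theorem dual_update_key_lemma_general {n m : ℕ}
    (Y : Set (Euc m)) (hYcv : Convex ℝ Y)
    (g : Euc m → ℝ) (hg : ConvexOn ℝ Set.univ g)
    (A : Euc n →L[ℝ] Euc m) (γ : ℝ) (yk : Euc m)
    (φ : Euc m → ℝ) (φ' : Euc m → Euc m) (ϱ : ℝ) (hϱ : 0 < ϱ)
    (hφg : ∀ z, HasGradientAt φ (φ' z) z)
    (hφsc : ConvexOn ℝ Set.univ (fun z => φ z - ϱ / 2 * ‖z‖ ^ 2))
    (φn : Euc n → ℝ) (φn' : Euc n → Euc n)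
    (hφng : ∀ z, HasGradientAt φn (φn' z) z)
    (hφnsc : ConvexOn ℝ Set.univ (fun z => φn z - ϱ / 2 * ‖z‖ ^ 2))
    (u w : Euc n) (yu yw : Euc m)
    (hyu_mem : yu ∈ Y)
    (hyu_min : ∀ y ∈ Y,
      g yu - ⟪A u, yu⟫ + γ * φ yu - γ * ⟪φ' yk, yu - yk⟫ ≤
        g y - ⟪A u, y⟫ + γ * φ y - γ * ⟪φ' yk, y - yk⟫)
    (hyw_mem : yw ∈ Y)
    (hyw_min : ∀ y ∈ Y,
      g yw - ⟪A w, yw⟫ + γ * φ yw - γ * ⟪φ' yk, yw - yk⟫ ≤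
        g y - ⟪A w, y⟫ + γ * φ y - γ * ⟪φ' yk, y - yk⟫) :
    ∀ y ∈ Y, ∀ α : ℝ, 0 < α →
      g yu - g y + ⟪yu - y, -(A w)⟫ ≤
        γ * Breg φ φ' y yk - γ * Breg φ φ' y yw - γ * Breg φ φ' yu yk
          + α * ‖(ContinuousLinearMap.adjoint A).comp A‖ / ϱ * Breg φn φn' w u
          - (γ - 1 / (α * ϱ)) * Breg φ φ' yw yu := by
  intro y hy α hα
  have hf (v : Euc n) : ConvexOn ℝ Y (fun z => g z - ⟪A v, z⟫) :=
    (hg.subset (subset_univ Y) hYcv).sub ((innerSL ℝ (A v)).toLinearMap.concaveOn hYcv)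
  have hu := (isMinOn_iff.mpr hyu_min).sub_le_of_prox hYcv (hf u) (hφg yu) hyu_mem hyw_mem
  have hw := (isMinOn_iff.mpr hyw_min).sub_le_of_prox hYcv (hf w) (hφg yw) hyw_mem hy
  rw [Breg_three_point] at hu hw
  have hBn : ϱ / 2 * ‖w - u‖ ^ 2 ≤ Breg φn φn' w u :=
    sq_norm_sub_le_of_convexOn_sub_sq convex_univ hφnsc (hφng u) trivial trivial
  have hB : ϱ / 2 * ‖yw - yu‖ ^ 2 ≤ Breg φ φ' yw yu :=
    sq_norm_sub_le_of_convexOn_sub_sq convex_univ hφsc (hφg yu) trivial trivial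
  set N := ‖(ContinuousLinearMap.adjoint A).comp A‖
  have hcross : ⟪A u - A w, yu - yw⟫ ≤
      α * N / ϱ * Breg φn φn' w u + 1 / (α * ϱ) * Breg φ φ' yw yu :=
    calc ⟪A u - A w, yu - yw⟫ ≤ α / 2 * N * ‖u - w‖ ^ 2 + 1 / (2 * α) * ‖yu - yw‖ ^ 2 := by
          rw [← map_sub]; exact A.real_inner_apply_le hα _ _
      _ = α * N / ϱ * (ϱ / 2 * ‖w - u‖ ^ 2) + 1 / (α * ϱ) * (ϱ / 2 * ‖yw - yu‖ ^ 2) := by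
          rw [norm_sub_rev w, norm_sub_rev yw]; field_simp
      _ ≤ _ := by gcongr
  have hsplit : g yu - g y + ⟪yu - y, -(A w)⟫ = (g yu - ⟪A u, yu⟫ - (g yw - ⟪A u, yw⟫))
      + (g yw - ⟪A w, yw⟫ - (g y - ⟪A w, y⟫)) + ⟪A u - A w, yu - yw⟫ := by
    simp only [inner_neg_right, inner_sub_left, inner_sub_right, real_inner_comm (A w)]
    ring
  rw [hsplit]
  linarith

/-- key lemma for the dual updates of SPIDA. -/
theorem dual_update_key_lemma {n m : ℕ}
    (Y : Set (Euc m)) (hYne : Y.Nonempty) (hYcl : IsClosed Y) (hYcv : Convex ℝ Y)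
    (g : Euc m → ℝ) (hg : ConvexOn ℝ Set.univ g) (hglsc : LowerSemicontinuous g)
    (A : Euc n →L[ℝ] Euc m) (γ : ℝ) (hγ : 0 < γ) (yk : Euc m)
    (φ : Euc m → ℝ) (φ' : Euc m → Euc m) (ϱ : ℝ) (hϱ : 0 < ϱ)
    (hφg : ∀ z, HasGradientAt φ (φ' z) z)
    (hφsc : ConvexOn ℝ Set.univ (fun z => φ z - ϱ / 2 * ‖z‖ ^ 2))
    (φn : Euc n → ℝ) (φn' : Euc n → Euc n)
    (hφng : ∀ z, HasGradientAt φn (φn' z) z)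
    (hφnsc : ConvexOn ℝ Set.univ (fun z => φn z - ϱ / 2 * ‖z‖ ^ 2))
    (u w : Euc n) (yu yw : Euc m)
    (hyu_mem : yu ∈ Y)
    (hyu_min : ∀ y ∈ Y,
      g yu - ⟪A u, yu⟫ + γ * φ yu - γ * ⟪φ' yk, yu - yk⟫ ≤
        g y - ⟪A u, y⟫ + γ * φ y - γ * ⟪φ' yk, y - yk⟫)
    (hyw_mem : yw ∈ Y)
    (hyw_min : ∀ y ∈ Y,
      g yw - ⟪A w, yw⟫ + γ * φ yw - γ * ⟪φ' yk, yw - yk⟫ ≤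
        g y - ⟪A w, y⟫ + γ * φ y - γ * ⟪φ' yk, y - yk⟫) :
    ∀ y ∈ Y, ∀ α : ℝ, 0 < α →
      g yu - g y + ⟪yu - y, -(A w)⟫ ≤
        γ * Breg φ φ' y yk - γ * Breg φ φ' y yw - γ * Breg φ φ' yu yk
          + α * ‖(ContinuousLinearMap.adjoint A).comp A‖ / ϱ * Breg φn φn' w u
          - (γ - 1 / (α * ϱ)) * Breg φ φ' yw yu :=
  dual_update_key_lemma_general Y hYcv g hg A γ yk φ φ' ϱ hϱ hφg hφsc φn φn' hφng hφnsc u w yu yw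
    hyu_mem hyu_min hyw_mem hyw_min
end
end

section
/- Let (x^{k+1}, ỹ^{k+1}, y^{k+1}) be produced by one SPIDA iteration from (x^k, y^k), where the dual kernel φ on ℝ^m is differentiable and ϱ-strongly convex and a differentiable ϱ-strongly convex kernel on ℝ^n (also denoted φ) is given. Then for every y ∈ Y and every α > 0: L(x^{k+1}, y) − L(x^{k+1}, ỹ^{k+1}) ≤ γ B_φ(y, y^k) − γ B_φ(y, y^{k+1}) − γ B_φ(ỹ^{k+1}, y^k) + (α‖AᵀA‖/ϱ) B_φ(x^{k+1}, x^k) − (γ − 1/(αϱ)) B_φ(y^{k+1}, ỹ^{k+1}), where ‖AᵀA‖ is the spectral norm of AᵀA. -/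
noncomputable section
open scoped RealInnerProductSpace
open Filter

/-- The convex-concave Lagrangian `L(x,y) = f(x) + ⟨Ax, y⟩ − g(y)`. -/
def Lag {n m : ℕ} (f : Euc n → ℝ) (g : Euc m → ℝ) (A : Euc n →L[ℝ] Euc m)
    (x : Euc n) (y : Euc m) : ℝ := f x + ⟪A x, y⟫ - g y


/-!
Optimality of the dual Bregman proximal step defining `yt1` (tested at `y1`) and of the one
defining `y1` (tested at `y`) gives, by the three-point identity
`B(y, w) - B(y, u) - B(u, w) = ⟪∇φ u - ∇φ w, y - u⟫`, two inequalities whose sum telescopes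
into the claimed bound up to the cross term `⟪A (x1 - xk), y1 - yt1⟫`, which appears because
the two steps use `A xk` and `A x1`. Young's inequality, `‖A‖² = ‖A†A‖` and `ϱ`-strong convexity
of both kernels bound the cross term by the `B_φn(x1, xk)` and `B_φ(y1, yt1)` terms.
-/

open Set

section RealInnerProductSpace

variable {E : Type*} [NormedAddCommGroup E] [InnerProductSpace ℝ E] [CompleteSpace E]

theorem HasGradientAt.hasDerivAt_comp_add_smul {F : E → ℝ} {G u : E} (hF : HasGradientAt F G u)
    (v : E) : HasDerivAt (fun t : ℝ => F (u + t • v)) ⟪G, v⟫ 0 := by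
  have hline : HasDerivAt (fun t : ℝ => u + t • v) v 0 := by
    simpa using ((hasDerivAt_id (0 : ℝ)).smul_const v).const_add u
  have hF' : HasFDerivAt F (InnerProductSpace.toDual ℝ E G) (u + (0 : ℝ) • v) := by
    simpa using hF.hasFDerivAt
  have h := hF'.comp_hasDerivAt 0 hline
  simp only [InnerProductSpace.toDual_apply_apply] at h
  exact h

theorem HasGradientAt.neg {F : E → ℝ} {G u : E} (hF : HasGradientAt F G u) :
    HasGradientAt (fun z => -F z) (-G) u := by
  rw [hasGradientAt_iff_hasFDerivAt, map_neg]
  exact hF.hasFDerivAt.neg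

theorem HasGradientAt.sub_le_inner_of_isMinOn_add {s : Set E} (hs : Convex ℝ s) {h F : E → ℝ}
    (hh : ConvexOn ℝ s h) {G u y : E} (hF : HasGradientAt F G u) (hu : u ∈ s) (hy : y ∈ s)
    (hmin : IsMinOn (fun z => h z + F z) s u) : h u - h y ≤ ⟪G, y - u⟫ := by
  -- `t = 0` minimizes `ℓ` on `[0, 1]`, because `h` lies below its chord from `u` to `y`
  set ℓ : ℝ → ℝ := fun t => F (u + t • (y - u)) + t * (h y - h u)
  have hℓ : HasDerivAt ℓ (⟪G, y - u⟫ + (h y - h u)) 0 :=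
    (hF.hasDerivAt_comp_add_smul (y - u)).fun_add (hasDerivAt_mul_const _)
  have hℓmin : IsMinOn ℓ (Icc 0 1) 0 := by
    rintro t ⟨ht0, ht1⟩
    have hcomb : u + t • (y - u) = (1 - t) • u + t • y := by module
    have hmem : u + t • (y - u) ∈ s := hcomb ▸ hs hu hy (by linarith) ht0 (by ring)
    have hchord : h (u + t • (y - u)) ≤ (1 - t) * h u + t * h y := by
      simpa [hcomb] using hh.2 hu hy (by linarith : (0 : ℝ) ≤ 1 - t) ht0 (by ring)
    have hle := hmin hmem
    simp only [mem_ofPred_eq, ℓ, zero_smul, add_zero, zero_mul] at hle ⊢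
    nlinarith
  have hone : (1 : ℝ) ∈ posTangentConeAt (Icc 0 1) (0 : ℝ) :=
    mem_posTangentConeAt_of_segment_subset (by simp [segment_eq_Icc])
  have hderiv := hℓmin.localize.hasFDerivWithinAt_nonneg hℓ.hasFDerivAt.hasFDerivWithinAt hone
  simp only [ContinuousLinearMap.toSpanSingleton_apply, one_smul] at hderiv
  linarith

theorem ConvexOn.add_inner_le_of_hasGradientAt {s : Set E} (hs : Convex ℝ s) {c : E → ℝ}
    (hc : ConvexOn ℝ s c) {G x y : E} (hG : HasGradientAt c G y) (hx : x ∈ s) (hy : y ∈ s) :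
    c y + ⟪G, x - y⟫ ≤ c x := by
  -- `c + (-c) = 0` is minimized at every point of `s`
  have hopt := hG.neg.sub_le_inner_of_isMinOn_add hs hc hy hx (fun z _ => by simp)
  rw [inner_neg_left] at hopt
  linarith

theorem real_inner_apply_le_young {F : Type*} [NormedAddCommGroup F] [InnerProductSpace ℝ F]
    [CompleteSpace F] (A : E →L[ℝ] F) (z : E) (v : F) {α : ℝ} (hα : 0 < α) :
    ⟪A z, v⟫ ≤ α / 2 * ‖(ContinuousLinearMap.adjoint A).comp A‖ * ‖z‖ ^ 2
      + 1 / (2 * α) * ‖v‖ ^ 2 := by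
  rw [ContinuousLinearMap.norm_adjoint_comp_self]
  have hAz : ‖A z‖ ≤ ‖A‖ * ‖z‖ := A.le_opNorm z
  have hyoung : ‖A z‖ * ‖v‖ ≤ α / 2 * ‖A z‖ ^ 2 + 1 / (2 * α) * ‖v‖ ^ 2 := by
    have hnonneg : 0 ≤ (α * ‖A z‖ - ‖v‖) ^ 2 / (2 * α) := by positivity
    have expand : (α * ‖A z‖ - ‖v‖) ^ 2 / (2 * α)
        = α / 2 * ‖A z‖ ^ 2 + 1 / (2 * α) * ‖v‖ ^ 2 - ‖A z‖ * ‖v‖ := by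
      field_simp
      ring
    linarith
  have hsq : ‖A z‖ ^ 2 ≤ (‖A‖ * ‖z‖) ^ 2 := pow_le_pow_left₀ (norm_nonneg _) hAz 2
  nlinarith [real_inner_le_norm (A z) v]

end RealInnerProductSpace

section Bregman

variable {d : ℕ} {φ : Euc d → ℝ} {φ' : Euc d → Euc d}

theorem breg_three_point (y u w : Euc d) :
    Breg φ φ' y w - Breg φ φ' y u - Breg φ φ' u w = ⟪φ' u - φ' w, y - u⟫ := by
  unfold Breg
  rw [show y - w = (y - u) + (u - w) by abel, inner_sub_left, inner_add_right]
  ring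

theorem hasGradientAt_breg_left {u : Euc d} (hφ : HasGradientAt φ (φ' u) u) (w : Euc d) :
    HasGradientAt (fun z => Breg φ φ' z w) (φ' u - φ' w) u := by
  rw [hasGradientAt_iff_hasFDerivAt, map_sub]
  have hlin : HasFDerivAt (fun z => ⟪φ' w, z - w⟫) (InnerProductSpace.toDual ℝ _ (φ' w)) u := by
    simpa [inner_sub_right] using
      ((InnerProductSpace.toDual ℝ _ (φ' w)).hasFDerivAt (x := u)).sub_const ⟪φ' w, w⟫
  exact (hφ.hasFDerivAt.sub_const (φ w)).sub hlin

theorem breg_nonneg (hφ : ConvexOn ℝ univ φ) {y : Euc d} (hφy : HasGradientAt φ (φ' y) y)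
    (x : Euc d) : 0 ≤ Breg φ φ' x y := by
  have hfirst := hφ.add_inner_le_of_hasGradientAt convex_univ hφy (mem_univ x) (mem_univ y)
  unfold Breg
  linarith

theorem breg_sub_half_mul_sq_norm (ϱ : ℝ) (x y : Euc d) :
    Breg (fun z => φ z - ϱ / 2 * ‖z‖ ^ 2) (fun z => φ' z - ϱ • z) x y
      = Breg φ φ' x y - ϱ / 2 * ‖x - y‖ ^ 2 := by
  unfold Breg
  simp only [norm_sub_sq_real, inner_sub_left, inner_sub_right, real_inner_smul_left,
    real_inner_self_eq_norm_sq, real_inner_comm x y]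
  ring

theorem hasGradientAt_sub_half_mul_sq_norm {u : Euc d} (hφ : HasGradientAt φ (φ' u) u) (ϱ : ℝ) :
    HasGradientAt (fun z => φ z - ϱ / 2 * ‖z‖ ^ 2) (φ' u - ϱ • u) u := by
  have hsq : HasFDerivAt (fun z : Euc d => ϱ / 2 * ‖z‖ ^ 2) ((ϱ / 2) • 2 • innerSL ℝ u) u :=
    (hasStrictFDerivAt_norm_sq u).hasFDerivAt.const_smul (ϱ / 2)
  rw [hasGradientAt_iff_hasFDerivAt]
  refine (hφ.hasFDerivAt.sub hsq).congr_fderiv ?_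
  ext w
  simp only [sub_apply, InnerProductSpace.toDual_apply_apply, smul_apply, coe_innerSL_apply,
    nsmul_eq_mul, Nat.cast_ofNat, smul_eq_mul, inner_sub_left, real_inner_smul_left]
  ring

theorem half_mul_sq_norm_sub_le_breg {ϱ : ℝ} (hφ : ∀ z, HasGradientAt φ (φ' z) z)
    (hsc : ConvexOn ℝ univ (fun z => φ z - ϱ / 2 * ‖z‖ ^ 2)) (x y : Euc d) :
    ϱ / 2 * ‖x - y‖ ^ 2 ≤ Breg φ φ' x y := by
  have hnonneg := breg_nonneg (φ' := fun z => φ' z - ϱ • z) hsc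
    (hasGradientAt_sub_half_mul_sq_norm (hφ y) ϱ) x
  rw [breg_sub_half_mul_sq_norm] at hnonneg
  linarith

theorem breg_prox_three_point {Y : Set (Euc d)} (hY : Convex ℝ Y) {g : Euc d → ℝ}
    (hg : ConvexOn ℝ Y g) {γ : ℝ} {w yk u : Euc d} (hφu : HasGradientAt φ (φ' u) u) (hu : u ∈ Y)
    (hmax : ∀ y ∈ Y, -g y + ⟪w, y⟫ - γ * Breg φ φ' y yk ≤
      -g u + ⟪w, u⟫ - γ * Breg φ φ' u yk)
    {y : Euc d} (hy : y ∈ Y) :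
    (-g y + ⟪w, y⟫) - (-g u + ⟪w, u⟫) ≤
      γ * (Breg φ φ' y yk - Breg φ φ' y u - Breg φ φ' u yk) := by
  have hh : ConvexOn ℝ Y (fun z => g z - ⟪w, z⟫) :=
    hg.sub ((innerₛₗ ℝ w).concaveOn hY)
  have hF : HasGradientAt (fun z => γ * Breg φ φ' z yk) (γ • (φ' u - φ' yk)) u := by
    rw [hasGradientAt_iff_hasFDerivAt, map_smul]
    exact (hasGradientAt_breg_left hφu yk).hasFDerivAt.const_smul γ
  have hopt := hF.sub_le_inner_of_isMinOn_add hY hh hu hy (fun z hz => by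
    have := hmax z hz
    simp only [mem_ofPred_eq]
    linarith)
  rw [real_inner_smul_left] at hopt
  rw [breg_three_point]
  linarith

end Bregman

theorem spida_dual_descent_general {n m : ℕ}
    (Y : Set (Euc m))
    (hYcv : Convex ℝ Y)
    (f : Euc n → ℝ) (g : Euc m → ℝ)
    (hg : ConvexOn ℝ Set.univ g)
    (A : Euc n →L[ℝ] Euc m)
    (γ : ℝ)
    (φ : Euc m → ℝ) (φ' : Euc m → Euc m)
    (hφg : ∀ z, HasGradientAt φ (φ' z) z)
    (xk x1 : Euc n) (yk yt1 y1 : Euc m)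
    (hyt1mem : yt1 ∈ Y)
    (hyt1max : ∀ y ∈ Y, -g y + ⟪A xk, y⟫ - γ * Breg φ φ' y yk ≤
      -g yt1 + ⟪A xk, yt1⟫ - γ * Breg φ φ' yt1 yk)
    (hy1mem : y1 ∈ Y)
    (hy1max : ∀ y ∈ Y, -g y + ⟪A x1, y⟫ - γ * Breg φ φ' y yk ≤
      -g y1 + ⟪A x1, y1⟫ - γ * Breg φ φ' y1 yk)
    (ϱ : ℝ) (hϱ : 0 < ϱ)
    (hφsc : ConvexOn ℝ Set.univ (fun z => φ z - ϱ / 2 * ‖z‖ ^ 2))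
    (φn : Euc n → ℝ) (φn' : Euc n → Euc n)
    (hφng : ∀ z, HasGradientAt φn (φn' z) z)
    (hφnsc : ConvexOn ℝ Set.univ (fun z => φn z - ϱ / 2 * ‖z‖ ^ 2)) :
    ∀ y ∈ Y, ∀ α : ℝ, 0 < α →
      Lag f g A x1 y - Lag f g A x1 yt1 ≤
        γ * Breg φ φ' y yk - γ * Breg φ φ' y y1 - γ * Breg φ φ' yt1 yk
          + α * ‖(ContinuousLinearMap.adjoint A).comp A‖ / ϱ * Breg φn φn' x1 xk
          - (γ - 1 / (α * ϱ)) * Breg φ φ' y1 yt1 := by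
  intro y hy α hα
  have hgY : ConvexOn ℝ Y g := hg.subset (subset_univ Y) hYcv
  have hstep₁ := breg_prox_three_point hYcv hgY (hφg yt1) hyt1mem hyt1max hy1mem
  have hstep₂ := breg_prox_three_point hYcv hgY (hφg y1) hy1mem hy1max hy
  set N := ‖(ContinuousLinearMap.adjoint A).comp A‖
  have hcross : ⟪A (x1 - xk), y1 - yt1⟫ ≤
      α * N / ϱ * Breg φn φn' x1 xk + 1 / (α * ϱ) * Breg φ φ' y1 yt1 :=
    calc ⟪A (x1 - xk), y1 - yt1⟫
        ≤ α / 2 * N * ‖x1 - xk‖ ^ 2 + 1 / (2 * α) * ‖y1 - yt1‖ ^ 2 :=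
          real_inner_apply_le_young A _ _ hα
      _ = α * N / ϱ * (ϱ / 2 * ‖x1 - xk‖ ^ 2) + 1 / (α * ϱ) * (ϱ / 2 * ‖y1 - yt1‖ ^ 2) := by
          field_simp
      _ ≤ α * N / ϱ * Breg φn φn' x1 xk + 1 / (α * ϱ) * Breg φ φ' y1 yt1 := by
          gcongr
          · exact half_mul_sq_norm_sub_le_breg hφng hφnsc x1 xk
          · exact half_mul_sq_norm_sub_le_breg hφg hφsc y1 yt1
  rw [map_sub, inner_sub_left, inner_sub_right, inner_sub_right] at hcross
  unfold Lag
  linarith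

/-- descent inequality for the dual part of one SPIDA iteration. -/
theorem spida_dual_descent {n m : ℕ}
    (X : Set (Euc n)) (Y : Set (Euc m))
    (hXne : X.Nonempty) (hXcl : IsClosed X) (hXcv : Convex ℝ X)
    (hYne : Y.Nonempty) (hYcl : IsClosed Y) (hYcv : Convex ℝ Y)
    (f : Euc n → ℝ) (g : Euc m → ℝ)
    (hf : ConvexOn ℝ Set.univ f) (hflsc : LowerSemicontinuous f)
    (hg : ConvexOn ℝ Set.univ g) (hglsc : LowerSemicontinuous g)
    (A : Euc n →L[ℝ] Euc m)
    (γ μ : ℝ) (hγ : 0 < γ) (hμ : 0 < μ)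
    (φ : Euc m → ℝ) (φ' : Euc m → Euc m)
    (hφg : ∀ z, HasGradientAt φ (φ' z) z) (hφcv : ConvexOn ℝ Set.univ φ)
    (ψ : Euc n → ℝ) (ψ' : Euc n → Euc n)
    (hψg : ∀ z, HasGradientAt ψ (ψ' z) z) (hψcv : ConvexOn ℝ Set.univ ψ)
    (xk x1 : Euc n) (yk yt1 y1 : Euc m)
    (hxk : xk ∈ X) (hyk : yk ∈ Y)
    (hyt1mem : yt1 ∈ Y)
    (hyt1max : ∀ y ∈ Y, -g y + ⟪A xk, y⟫ - γ * Breg φ φ' y yk ≤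
      -g yt1 + ⟪A xk, yt1⟫ - γ * Breg φ φ' yt1 yk)
    (hx1mem : x1 ∈ X)
    (hx1min : ∀ x ∈ X, f x1 + ⟪A x1, yt1⟫ + μ * Breg ψ ψ' x1 xk ≤
      f x + ⟪A x, yt1⟫ + μ * Breg ψ ψ' x xk)
    (hy1mem : y1 ∈ Y)
    (hy1max : ∀ y ∈ Y, -g y + ⟪A x1, y⟫ - γ * Breg φ φ' y yk ≤
      -g y1 + ⟪A x1, y1⟫ - γ * Breg φ φ' y1 yk)
    (ϱ : ℝ) (hϱ : 0 < ϱ)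
    (hφsc : ConvexOn ℝ Set.univ (fun z => φ z - ϱ / 2 * ‖z‖ ^ 2))
    (φn : Euc n → ℝ) (φn' : Euc n → Euc n)
    (hφng : ∀ z, HasGradientAt φn (φn' z) z)
    (hφnsc : ConvexOn ℝ Set.univ (fun z => φn z - ϱ / 2 * ‖z‖ ^ 2)) :
    ∀ y ∈ Y, ∀ α : ℝ, 0 < α →
      Lag f g A x1 y - Lag f g A x1 yt1 ≤
        γ * Breg φ φ' y yk - γ * Breg φ φ' y y1 - γ * Breg φ φ' yt1 yk
          + α * ‖(ContinuousLinearMap.adjoint A).comp A‖ / ϱ * Breg φn φn' x1 xk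
          - (γ - 1 / (α * ϱ)) * Breg φ φ' y1 yt1 :=
  spida_dual_descent_general Y hYcv f g hg A γ φ φ' hφg xk x1 yk yt1 y1 hyt1mem hyt1max hy1mem
    hy1max ϱ hϱ hφsc φn φn' hφng hφnsc
end
end

section
/- Let (x^{k+1}, ỹ^{k+1}, y^{k+1}) be produced by one SPIDA iteration from (x^k, y^k), with ψ differentiable and convex. Then for every x ∈ X: L(x^{k+1}, ỹ^{k+1}) − L(x, ỹ^{k+1}) ≤ μ B_ψ(x, x^k) − μ B_ψ(x, x^{k+1}) − μ B_ψ(x^{k+1}, x^k). -/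
noncomputable section
open scoped RealInnerProductSpace
open Filter

/-! Since `x1` minimizes over `X` the sum of the convex function `f + ⟪A ·, yt1⟫` and the
differentiable function `μ * Breg ψ ψ' · xk`, comparing it with the points of the segment
towards `x` and letting them tend to `x1` gives the variational inequality
`L(x1, yt1) - L(x, yt1) ≤ μ ⟪ψ' x1 - ψ' xk, x - x1⟫`. The three-point identity of Bregman
distances rewrites its right-hand side as the claimed combination. -/

theorem IsMinOn.sub_le_fderiv_of_convexOn_add {E : Type*} [NormedAddCommGroup E]
    [NormedSpace ℝ E] {s : Set E} {h D : E → ℝ} {D' : E →L[ℝ] ℝ} {a x : E}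
    (hmin : IsMinOn (h + D) s a) (hh : ConvexOn ℝ s h) (hD : HasFDerivAt D D' a)
    (ha : a ∈ s) (hx : x ∈ s) :
    h a - h x ≤ D' (x - a) := by
  -- `h` is replaced by its chord along the segment, which keeps `0` a minimizer on `[0, 1]`.
  set φ : ℝ → ℝ := fun t => D (a + t • (x - a)) + t * (h x - h a)
  have hφ : HasDerivAt φ (D' (x - a) + (h x - h a)) 0 := by
    have hline : HasDerivAt (fun t : ℝ => a + t • (x - a)) (x - a) 0 := by
      simpa using ((hasDerivAt_id (0 : ℝ)).smul_const (x - a)).const_add a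
    have hDline := (zero_smul ℝ (x - a) ▸ add_zero a ▸ hD).comp_hasDerivAt 0 hline
    exact (hDline.add ((hasDerivAt_id (0 : ℝ)).mul_const (h x - h a))).congr_deriv
      (by simp only [map_sub, one_mul])
  have hφmin : IsMinOn φ (Set.Icc 0 1) 0 := by
    intro t ⟨ht0, ht1⟩
    have hseg : a + t • (x - a) = (1 - t) • a + t • x := by module
    have hmem : a + t • (x - a) ∈ s := hseg ▸ hh.1 ha hx (by linarith) ht0 (by ring)
    have hopt : h a + D a ≤ h (a + t • (x - a)) + D (a + t • (x - a)) := hmin hmem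
    have hchord : h (a + t • (x - a)) ≤ (1 - t) * h a + t * h x := by
      rw [hseg]; exact hh.2 ha hx (by linarith) ht0 (by ring)
    show φ 0 ≤ φ t
    simp only [φ, zero_smul, add_zero, zero_mul]
    linarith
  have hslope := hφmin.localize.hasFDerivWithinAt_nonneg hφ.hasFDerivAt.hasFDerivWithinAt
    (y := 1) (mem_posTangentConeAt_of_segment_subset (by simp [segment_eq_Icc]))
  simp only [map_sub, ContinuousLinearMap.toSpanSingleton_apply, smul_eq_mul, one_mul]
    at hslope
  rw [map_sub]
  linarith

theorem hasFDerivAt_breg_left {d : ℕ} {ψ : Euc d → ℝ} {ψ' : Euc d → Euc d} {x : Euc d}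
    (hψ : HasGradientAt ψ (ψ' x) x) (y : Euc d) :
    HasFDerivAt (fun z => Breg ψ ψ' z y) (innerSL ℝ (ψ' x - ψ' y)) x := by
  have hsum := (hψ.hasFDerivAt.sub_const (ψ y)).sub
    ((innerSL ℝ (ψ' y)).hasFDerivAt.sub_const ⟪ψ' y, y⟫)
  refine (hsum.congr_fderiv ?_).congr_of_eventuallyEq (Eventually.of_forall fun z => ?_)
  · ext v
    simp only [sub_apply, InnerProductSpace.toDual_apply_apply,
      coe_innerSL_apply, map_sub]
  · simp only [Breg, Pi.sub_apply, innerSL_apply_apply, inner_sub_right]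

theorem breg_three_point_s7 {d : ℕ} (ψ : Euc d → ℝ) (ψ' : Euc d → Euc d) (x y z : Euc d) :
    Breg ψ ψ' x z - Breg ψ ψ' x y - Breg ψ ψ' y z = ⟪ψ' y - ψ' z, x - y⟫ := by
  simp only [Breg, inner_sub_left, inner_sub_right]
  ring

theorem spida_primal_descent_general {n m : ℕ}
    (X : Set (Euc n))
    (hXcv : Convex ℝ X)
    (f : Euc n → ℝ) (g : Euc m → ℝ)
    (hf : ConvexOn ℝ Set.univ f)
    (A : Euc n →L[ℝ] Euc m)
    (μ : ℝ)
    (ψ : Euc n → ℝ) (ψ' : Euc n → Euc n)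
    (hψg : ∀ z, HasGradientAt ψ (ψ' z) z)
    (xk x1 : Euc n) (yt1 : Euc m)
    (hx1mem : x1 ∈ X)
    (hx1min : ∀ x ∈ X, f x1 + ⟪A x1, yt1⟫ + μ * Breg ψ ψ' x1 xk ≤
      f x + ⟪A x, yt1⟫ + μ * Breg ψ ψ' x xk)
    :
    ∀ x ∈ X,
      Lag f g A x1 yt1 - Lag f g A x yt1 ≤
        μ * Breg ψ ψ' x xk - μ * Breg ψ ψ' x x1 - μ * Breg ψ ψ' x1 xk := by
  intro x hx
  have hcoupling : ConvexOn ℝ X (fun z => ⟪A z, yt1⟫) :=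
    (((innerSL ℝ yt1).comp A).toLinearMap.convexOn hXcv).congr fun z _ => real_inner_comm (A z) yt1
  have hmin : IsMinOn ((fun z => f z + ⟪A z, yt1⟫) + fun z => μ * Breg ψ ψ' z xk) X x1 :=
    hx1min
  have hvar := hmin.sub_le_fderiv_of_convexOn_add
    ((hf.subset (Set.subset_univ X) hXcv).add hcoupling)
    ((hasFDerivAt_breg_left (hψg x1) xk).const_mul μ) hx1mem hx
  simp only [smul_apply, innerSL_apply_apply, smul_eq_mul,
    ← breg_three_point_s7 ψ ψ' x x1 xk] at hvar
  simp only [Lag]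
  linarith

/-- descent inequality for the primal part of one SPIDA iteration. -/
theorem spida_primal_descent {n m : ℕ}
    (X : Set (Euc n)) (Y : Set (Euc m))
    (hXne : X.Nonempty) (hXcl : IsClosed X) (hXcv : Convex ℝ X)
    (hYne : Y.Nonempty) (hYcl : IsClosed Y) (hYcv : Convex ℝ Y)
    (f : Euc n → ℝ) (g : Euc m → ℝ)
    (hf : ConvexOn ℝ Set.univ f) (hflsc : LowerSemicontinuous f)
    (hg : ConvexOn ℝ Set.univ g) (hglsc : LowerSemicontinuous g)
    (A : Euc n →L[ℝ] Euc m)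
    (γ μ : ℝ) (hγ : 0 < γ) (hμ : 0 < μ)
    (φ : Euc m → ℝ) (φ' : Euc m → Euc m)
    (hφg : ∀ z, HasGradientAt φ (φ' z) z) (hφcv : ConvexOn ℝ Set.univ φ)
    (ψ : Euc n → ℝ) (ψ' : Euc n → Euc n)
    (hψg : ∀ z, HasGradientAt ψ (ψ' z) z) (hψcv : ConvexOn ℝ Set.univ ψ)
    (xk x1 : Euc n) (yk yt1 y1 : Euc m)
    (hxk : xk ∈ X) (hyk : yk ∈ Y)
    (hyt1mem : yt1 ∈ Y)
    (hyt1max : ∀ y ∈ Y, -g y + ⟪A xk, y⟫ - γ * Breg φ φ' y yk ≤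
      -g yt1 + ⟪A xk, yt1⟫ - γ * Breg φ φ' yt1 yk)
    (hx1mem : x1 ∈ X)
    (hx1min : ∀ x ∈ X, f x1 + ⟪A x1, yt1⟫ + μ * Breg ψ ψ' x1 xk ≤
      f x + ⟪A x, yt1⟫ + μ * Breg ψ ψ' x xk)
    (hy1mem : y1 ∈ Y)
    (hy1max : ∀ y ∈ Y, -g y + ⟪A x1, y⟫ - γ * Breg φ φ' y yk ≤
      -g y1 + ⟪A x1, y1⟫ - γ * Breg φ φ' y1 yk)
    :
    ∀ x ∈ X,
      Lag f g A x1 yt1 - Lag f g A x yt1 ≤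
        μ * Breg ψ ψ' x xk - μ * Breg ψ ψ' x x1 - μ * Breg ψ ψ' x1 xk :=
  spida_primal_descent_general X hXcv f g hf A μ ψ ψ' hψg xk x1 yt1 hx1mem hx1min
end
end

section
/- (Primal residual bound.) Let (x^{k+1}, ỹ^{k+1}, y^{k+1}) be produced by one SPIDA iteration from (x^k, y^k), with ψ differentiable convex and ∇ψ Lipschitz continuous with modulus L_ψ. Then there exists ξ^{k+1} ∈ ∂f(x^{k+1}) such that ‖x^{k+1} − Π_X[x^{k+1} − (ξ^{k+1} + Aᵀy^{k+1})]‖² ≤ 2‖AAᵀ‖ ‖ỹ^{k+1} − y^{k+1}‖² + 2μ² L_ψ² ‖x^{k+1} − x^k‖², where Π_X is the Euclidean projection onto X and ‖AAᵀ‖ is the spectral norm of AAᵀ. -/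
noncomputable section
open scoped RealInnerProductSpace
open Filter

/-- Convex subdifferential. -/
def subdiff {d : ℕ} (h : Euc d → ℝ) (x : Euc d) : Set (Euc d) :=
  {ξ | ∀ z, h x + ⟪z - x, ξ⟫ ≤ h z}

open Classical in
/-- Euclidean (metric) projection onto a set (the nearest point, when it exists). -/
def projOn {d : ℕ} (X : Set (Euc d)) (z : Euc d) : Euc d :=
  if h : ∃ p ∈ X, ∀ w ∈ X, ‖z - p‖ ≤ ‖z - w‖ then h.choose else z

/-!
The update `x1` minimises over `X` the convex function `f` plus a smooth term whose gradient
at `x1` is `v = Aᵀ yt1 + μ (∇ψ x1 - ∇ψ xk)`. Linearising the smooth term and separating the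
strict epigraph of `f` from `X × (-∞, f x1]` yields `ξ ∈ ∂f(x1)` with `-(ξ + v)` normal to `X`
at `x1`. The variational inequality of the projection then bounds the residual by
`‖Aᵀ y1 - v‖ ≤ ‖Aᵀ (y1 - yt1)‖ + |μ| Lψ ‖x1 - xk‖`, and `‖Aᵀ w‖² ≤ ‖A Aᵀ‖ ‖w‖²` together with
`(a + b)² ≤ 2 (a² + b²)` finish the estimate.
-/

open Set InnerProductSpace ContinuousLinearMap

section FirstOrder

variable {E : Type*} [NormedAddCommGroup E] [NormedSpace ℝ E]

theorem IsMinOn.isMinOn_add_fderiv {f s : E → ℝ} {s' : StrongDual ℝ E} {X : Set E} {x : E}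
    (hX : Convex ℝ X) (hf : ConvexOn ℝ X f) (hx : x ∈ X) (hs : HasFDerivAt s s' x)
    (hmin : IsMinOn (fun z => f z + s z) X x) :
    IsMinOn (fun z => f z + s' z) X x := by
  refine isMinOn_iff.2 fun z hz => ?_
  let k : ℝ → ℝ := fun t => s (x + t • (z - x)) + t * (f z - f x)
  -- convexity of `f` on the segment `[x, z]` makes `0` a minimiser of the smooth function `k`
  have hk_min : IsMinOn k (Icc 0 1) 0 := by
    refine isMinOn_iff.2 fun t ht => ?_
    have hxt : x + t • (z - x) = (1 - t) • x + t • z := by module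
    have hconv := hf.2 hx hz (sub_nonneg.2 ht.2) ht.1 (sub_add_cancel 1 t)
    rw [← hxt, smul_eq_mul, smul_eq_mul] at hconv
    have hmin_t := isMinOn_iff.1 hmin _ (hX.add_smul_sub_mem hx hz ht)
    simp only [k, zero_smul, add_zero, zero_mul]
    linarith
  have hk_deriv : HasDerivWithinAt k (s' (z - x) + (f z - f x)) (Icc 0 1) 0 := by
    have hline : HasDerivWithinAt (fun t : ℝ => x + t • (z - x)) (z - x) (Icc 0 1) 0 := by
      simpa using ((hasDerivWithinAt_id (0 : ℝ) (Icc 0 1)).smul_const (z - x)).const_add x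
    refine ((hs.comp_hasDerivWithinAt_of_eq 0 hline (by simp)).add
      ((hasDerivWithinAt_id (0 : ℝ) (Icc 0 1)).mul_const (f z - f x))).congr_deriv ?_
    rw [one_mul]
  have h1 : (1 : ℝ) ∈ posTangentConeAt (Icc 0 1) (0 : ℝ) := by
    simpa using sub_mem_posTangentConeAt_of_segment_subset (segment_eq_Icc zero_le_one).subset
  have hk_nonneg := hk_min.localize.hasFDerivWithinAt_nonneg hk_deriv.hasFDerivWithinAt h1
  simp only [toSpanSingleton_apply, one_smul, map_sub] at hk_nonneg
  linarith

end FirstOrder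

section Subgradient

variable {E : Type*} [NormedAddCommGroup E] [InnerProductSpace ℝ E] [CompleteSpace E]

theorem exists_subgradient_inner_nonneg_of_isMinOn {f : E → ℝ} {X : Set E} {x : E}
    (hf : ConvexOn ℝ univ f) (hfc : Continuous f) (hX : Convex ℝ X) (hx : x ∈ X)
    (hmin : IsMinOn f X x) :
    ∃ ξ, (∀ z, f x + ⟪z - x, ξ⟫ ≤ f z) ∧ ∀ z ∈ X, 0 ≤ ⟪ξ, z - x⟫ := by
  have hS : Convex ℝ {p : E × ℝ | f p.1 < p.2} := by
    simpa using hf.convex_strict_epigraph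
  have hT : Convex ℝ (X ×ˢ Iic (f x)) := hX.prod (convex_Iic _)
  have hdisj : Disjoint {p : E × ℝ | f p.1 < p.2} (X ×ˢ Iic (f x)) := by
    refine disjoint_left.2 fun p hp hpT => ?_
    exact (hp.trans_le hpT.2).not_ge (isMinOn_iff.1 hmin p.1 hpT.1)
  obtain ⟨L, c, hLS, hLT⟩ := geometric_hahn_banach_open hS
    (isOpen_lt (hfc.comp continuous_fst) continuous_snd) hT hdisj
  have hsep : ∀ z t z' t', f z < t → z' ∈ X → t' ≤ f x → L (z, t) < L (z', t') :=
    fun z t z' t' ht hz' ht' => (hLS (z, t) ht).trans_le (hLT (z', t') ⟨hz', ht'⟩)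
  set ℓ : StrongDual ℝ E := L.comp (inl ℝ E ℝ)
  set β := L (0, 1)
  have hL : ∀ z t, L (z, t) = ℓ z + t * β := fun z t => by
    rw [← smul_eq_mul, ← map_smul, coe_comp, Function.comp_apply, inl_apply, ← map_add]
    simp
  have hβ : 0 < -β := by
    have h := hsep x (f x + 1) x (f x) (by linarith) hx le_rfl
    rw [hL, hL] at h
    linarith
  have hshift : ∀ ε, ε / -β * β = -ε := fun ε => by
    rw [div_neg, neg_mul, div_mul_cancel₀ _ (neg_pos.1 hβ).ne]
  -- the subgradient is the horizontal part of `L`, normalised by its vertical component `β < 0`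
  refine ⟨(-β)⁻¹ • (toDual ℝ E).symm ℓ, fun z => ?_, fun z hz => ?_⟩
  · rw [real_inner_comm, real_inner_smul_left, toDual_symm_apply, map_sub]
    suffices h : ℓ z - ℓ x ≤ -β * (f z - f x) by
      linarith [(inv_mul_le_iff₀ hβ).2 h]
    refine le_of_forall_pos_lt_add fun ε hε => ?_
    have h := hsep z (f z + ε / -β) x (f x) (by linarith [div_pos hε hβ]) hx le_rfl
    rw [hL, hL, add_mul, hshift] at h
    linarith
  · rw [real_inner_smul_left, toDual_symm_apply, map_sub]
    refine mul_nonneg (inv_nonneg.2 hβ.le) (sub_nonneg.2 (le_of_forall_pos_lt_add fun ε hε => ?_))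
    have h := hsep x (f x + ε / -β) z (f x) (by linarith [div_pos hε hβ]) hz le_rfl
    rw [hL, hL, add_mul, hshift] at h
    linarith

theorem exists_subgradient_of_isMinOn_add {f s : E → ℝ} {v : E} {X : Set E} {x : E}
    (hf : ConvexOn ℝ univ f) (hfc : Continuous f) (hX : Convex ℝ X) (hx : x ∈ X)
    (hs : HasGradientAt s v x) (hmin : IsMinOn (fun z => f z + s z) X x) :
    ∃ ξ, (∀ z, f x + ⟪z - x, ξ⟫ ≤ f z) ∧ ∀ z ∈ X, 0 ≤ ⟪ξ + v, z - x⟫ := by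
  have hlin := hmin.isMinOn_add_fderiv hX (hf.subset (subset_univ X) hX) hx hs.hasFDerivAt
  obtain ⟨ζ, hζ, hζX⟩ := exists_subgradient_inner_nonneg_of_isMinOn
    (hf.add ((toDual ℝ E v).toLinearMap.convexOn convex_univ))
    (hfc.add (toDual ℝ E v).continuous) hX hx hlin
  refine ⟨ζ - v, fun z => ?_, fun z hz => by simpa using hζX z hz⟩
  have hζz := hζ z
  simp only [Pi.add_apply, coe_coe, toDual_apply_apply] at hζz
  rw [inner_sub_right, real_inner_comm v, inner_sub_right]
  linarith

end Subgradient

theorem ContinuousLinearMap.norm_adjoint_apply_sq_le {𝕜 E F : Type*} [RCLike 𝕜]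
    [NormedAddCommGroup E] [NormedAddCommGroup F] [InnerProductSpace 𝕜 E] [InnerProductSpace 𝕜 F]
    [CompleteSpace E] [CompleteSpace F] (A : E →L[𝕜] F) (w : F) :
    ‖adjoint A w‖ ^ 2 ≤ ‖A ∘L adjoint A‖ * ‖w‖ ^ 2 := by
  have hA := norm_adjoint_comp_self (adjoint A)
  rw [adjoint_adjoint] at hA
  calc ‖adjoint A w‖ ^ 2 ≤ (‖adjoint A‖ * ‖w‖) ^ 2 :=
        pow_le_pow_left₀ (norm_nonneg _) ((adjoint A).le_opNorm w) 2
    _ = ‖A ∘L adjoint A‖ * ‖w‖ ^ 2 := by rw [hA]; ring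

theorem hasGradientAt_inner_apply_left {E F : Type*} [NormedAddCommGroup E] [NormedAddCommGroup F]
    [InnerProductSpace ℝ E] [InnerProductSpace ℝ F] [CompleteSpace E] [CompleteSpace F]
    (A : E →L[ℝ] F) (y : F) (x : E) :
    HasGradientAt (fun x => ⟪A x, y⟫) (adjoint A y) x := by
  rw [hasGradientAt_iff_hasFDerivAt]
  refine (toDual ℝ E (adjoint A y)).hasFDerivAt.congr_of_eventuallyEq (.of_forall fun z => ?_)
  rw [toDual_apply_apply, adjoint_inner_left, real_inner_comm]

section Euclidean

variable {d : ℕ}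

theorem hasGradientAt_breg {ψ : Euc d → ℝ} {ψ' : Euc d → Euc d} {x : Euc d}
    (hψ : HasGradientAt ψ (ψ' x) x) (y : Euc d) :
    HasGradientAt (fun z => Breg ψ ψ' z y) (ψ' x - ψ' y) x := by
  rw [hasGradientAt_iff_hasFDerivAt, map_sub]
  refine ((hψ.hasFDerivAt.sub_const (ψ y)).sub
    ((toDual ℝ (Euc d) (ψ' y)).hasFDerivAt.sub_const ⟪ψ' y, y⟫)).congr_of_eventuallyEq
    (.of_forall fun z => ?_)
  simp only [Breg, Pi.sub_apply, toDual_apply_apply, inner_sub_right]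

theorem projOn_spec {X : Set (Euc d)} (hne : X.Nonempty) (hcl : IsClosed X) (u : Euc d) :
    projOn X u ∈ X ∧ ∀ w ∈ X, ‖u - projOn X u‖ ≤ ‖u - w‖ := by
  have hex : ∃ p ∈ X, ∀ w ∈ X, ‖u - p‖ ≤ ‖u - w‖ := by
    obtain ⟨p, hp, hdist⟩ := hcl.exists_infDist_eq_dist hne u
    refine ⟨p, hp, fun w hw => ?_⟩
    simpa only [← dist_eq_norm, ← hdist] using Metric.infDist_le_dist_of_mem hw
  rw [projOn, dif_pos hex]
  exact hex.choose_spec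

theorem inner_sub_projOn_le_zero {X : Set (Euc d)} (hcl : IsClosed X) (hcv : Convex ℝ X)
    (u : Euc d) {w : Euc d} (hw : w ∈ X) :
    ⟪u - projOn X u, w - projOn X u⟫ ≤ 0 := by
  obtain ⟨hp, hle⟩ := projOn_spec ⟨w, hw⟩ hcl u
  have : Nonempty X := ⟨⟨w, hw⟩⟩
  have hbdd : BddBelow (range fun w' : X => ‖u - w'‖) := ⟨0, by rintro _ ⟨w', rfl⟩; positivity⟩
  have hinf : ‖u - projOn X u‖ = ⨅ w' : X, ‖u - w'‖ :=
    le_antisymm (le_ciInf fun w' => hle w' w'.2) (ciInf_le hbdd ⟨_, hp⟩)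
  exact (norm_eq_iInf_iff_real_inner_le_zero hcv hp).1 hinf w hw

theorem norm_sub_projOn_sub_le {X : Set (Euc d)} (hcl : IsClosed X) (hcv : Convex ℝ X)
    {x ζ : Euc d} (hx : x ∈ X) (hζ : ∀ z ∈ X, 0 ≤ ⟪ζ, z - x⟫) (q : Euc d) :
    ‖x - projOn X (x - q)‖ ≤ ‖q - ζ‖ := by
  set p := projOn X (x - q)
  have hvi : ⟪x - q - p, x - p⟫ ≤ 0 := inner_sub_projOn_le_zero hcl hcv _ hx
  have hnormal : 0 ≤ ⟪ζ, p - x⟫ := hζ p (projOn_spec ⟨x, hx⟩ hcl _).1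
  have hsq : ‖x - p‖ ^ 2 ≤ ‖q - ζ‖ * ‖x - p‖ :=
    calc ‖x - p‖ ^ 2 = ⟪x - q - p, x - p⟫ - ⟪ζ, p - x⟫ + ⟪q - ζ, x - p⟫ := by
          rw [← real_inner_self_eq_norm_sq, ← neg_sub x p, inner_neg_right, sub_neg_eq_add,
            ← inner_add_left, ← inner_add_left]
          congr 1; abel
      _ ≤ ⟪q - ζ, x - p⟫ := by linarith
      _ ≤ ‖q - ζ‖ * ‖x - p‖ := real_inner_le_norm _ _
  rcases (norm_nonneg (x - p)).eq_or_lt with h | h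
  · rw [← h]; positivity
  · exact le_of_mul_le_mul_right (by rwa [sq] at hsq) h

end Euclidean

theorem spida_primal_residual_bound_general {n m : ℕ}
    (X : Set (Euc n))
    (hXcl : IsClosed X) (hXcv : Convex ℝ X)
    (f : Euc n → ℝ)
    (hf : ConvexOn ℝ Set.univ f)
    (A : Euc n →L[ℝ] Euc m)
    (μ : ℝ)
    (ψ : Euc n → ℝ) (ψ' : Euc n → Euc n)
    (hψg : ∀ z, HasGradientAt ψ (ψ' z) z)
    (xk x1 : Euc n) (yt1 y1 : Euc m)
    (hx1mem : x1 ∈ X)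
    (hx1min : ∀ x ∈ X, f x1 + ⟪A x1, yt1⟫ + μ * Breg ψ ψ' x1 xk ≤
      f x + ⟪A x, yt1⟫ + μ * Breg ψ ψ' x xk)
    (Lψ : NNReal) (hψlip : LipschitzWith Lψ ψ') :
    ∃ ξ ∈ subdiff f x1,
      ‖x1 - projOn X (x1 - (ξ + ContinuousLinearMap.adjoint A y1))‖ ^ 2 ≤
        2 * ‖A.comp (ContinuousLinearMap.adjoint A)‖ * ‖yt1 - y1‖ ^ 2
          + 2 * μ ^ 2 * (Lψ : ℝ) ^ 2 * ‖x1 - xk‖ ^ 2 := by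
  have hs : HasGradientAt (fun x => ⟪A x, yt1⟫ + μ * Breg ψ ψ' x xk)
      (adjoint A yt1 + μ • (ψ' x1 - ψ' xk)) x1 := by
    rw [hasGradientAt_iff_hasFDerivAt, map_add, map_smul]
    exact (hasGradientAt_inner_apply_left A yt1 x1).hasFDerivAt.add
      ((hasGradientAt_breg (hψg x1) xk).hasFDerivAt.const_mul μ)
  obtain ⟨ξ, hξ, hnormal⟩ := exists_subgradient_of_isMinOn_add hf
    (continuousOn_univ.1 (hf.continuousOn isOpen_univ)) hXcv hx1mem hs
    (isMinOn_iff.2 fun z hz => by linarith [hx1min z hz])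
  refine ⟨ξ, hξ, ?_⟩
  have hres := norm_sub_projOn_sub_le hXcl hXcv hx1mem hnormal (ξ + adjoint A y1)
  rw [show ξ + adjoint A y1 - (ξ + (adjoint A yt1 + μ • (ψ' x1 - ψ' xk)))
    = adjoint A (y1 - yt1) - μ • (ψ' x1 - ψ' xk) by rw [map_sub]; abel] at hres
  have hlip : ‖μ • (ψ' x1 - ψ' xk)‖ ≤ |μ| * (Lψ * ‖x1 - xk‖) := by
    rw [norm_smul, Real.norm_eq_abs]
    exact mul_le_mul_of_nonneg_left (hψlip.norm_sub_le x1 xk) (abs_nonneg μ)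
  calc _ ≤ (‖adjoint A (y1 - yt1)‖ + ‖μ • (ψ' x1 - ψ' xk)‖) ^ 2 :=
        pow_le_pow_left₀ (norm_nonneg _) (hres.trans (norm_sub_le _ _)) 2
    _ ≤ 2 * (‖adjoint A (y1 - yt1)‖ ^ 2 + ‖μ • (ψ' x1 - ψ' xk)‖ ^ 2) := add_sq_le
    _ ≤ 2 * (‖A ∘L adjoint A‖ * ‖yt1 - y1‖ ^ 2 + (|μ| * (Lψ * ‖x1 - xk‖)) ^ 2) := by
        rw [norm_sub_rev yt1 y1]
        gcongr
        exact norm_adjoint_apply_sq_le A _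
    _ = _ := by rw [mul_pow, sq_abs]; ring

/-- primal residual bound for one SPIDA iteration. -/
theorem spida_primal_residual_bound {n m : ℕ}
    (X : Set (Euc n)) (Y : Set (Euc m))
    (hXne : X.Nonempty) (hXcl : IsClosed X) (hXcv : Convex ℝ X)
    (hYne : Y.Nonempty) (hYcl : IsClosed Y) (hYcv : Convex ℝ Y)
    (f : Euc n → ℝ) (g : Euc m → ℝ)
    (hf : ConvexOn ℝ Set.univ f) (hflsc : LowerSemicontinuous f)
    (hg : ConvexOn ℝ Set.univ g) (hglsc : LowerSemicontinuous g)
    (A : Euc n →L[ℝ] Euc m)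
    (γ μ : ℝ) (hγ : 0 < γ) (hμ : 0 < μ)
    (φ : Euc m → ℝ) (φ' : Euc m → Euc m)
    (hφg : ∀ z, HasGradientAt φ (φ' z) z) (hφcv : ConvexOn ℝ Set.univ φ)
    (ψ : Euc n → ℝ) (ψ' : Euc n → Euc n)
    (hψg : ∀ z, HasGradientAt ψ (ψ' z) z) (hψcv : ConvexOn ℝ Set.univ ψ)
    (xk x1 : Euc n) (yk yt1 y1 : Euc m)
    (hxk : xk ∈ X) (hyk : yk ∈ Y)
    (hyt1mem : yt1 ∈ Y)
    (hyt1max : ∀ y ∈ Y, -g y + ⟪A xk, y⟫ - γ * Breg φ φ' y yk ≤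
      -g yt1 + ⟪A xk, yt1⟫ - γ * Breg φ φ' yt1 yk)
    (hx1mem : x1 ∈ X)
    (hx1min : ∀ x ∈ X, f x1 + ⟪A x1, yt1⟫ + μ * Breg ψ ψ' x1 xk ≤
      f x + ⟪A x, yt1⟫ + μ * Breg ψ ψ' x xk)
    (hy1mem : y1 ∈ Y)
    (hy1max : ∀ y ∈ Y, -g y + ⟪A x1, y⟫ - γ * Breg φ φ' y yk ≤
      -g y1 + ⟪A x1, y1⟫ - γ * Breg φ φ' y1 yk)
    (Lψ : NNReal) (hψlip : LipschitzWith Lψ ψ') :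
    ∃ ξ ∈ subdiff f x1,
      ‖x1 - projOn X (x1 - (ξ + ContinuousLinearMap.adjoint A y1))‖ ^ 2 ≤
        2 * ‖A.comp (ContinuousLinearMap.adjoint A)‖ * ‖yt1 - y1‖ ^ 2
          + 2 * μ ^ 2 * (Lψ : ℝ) ^ 2 * ‖x1 - xk‖ ^ 2 :=
  spida_primal_residual_bound_general X hXcl hXcv f hf A μ ψ ψ' hψg xk x1 yt1 y1 hx1mem hx1min Lψ
    hψlip
end
end
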